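/- Let α and β be algebraic units in ℂ such that [ℚ(α):ℚ] is coprime to [ℚ(β):ℚ] and [ℚ(αβ):ℚ] = [ℚ(β):ℚ] =: n. Then α^n = 1 or α^n = -1. -/

import Mathlib

/-!
Put `F = ℚ(α)` and `n = [ℚ(β):ℚ]`. Since `[ℚ(α):ℚ]` is coprime to the degrees of `β` and
`αβ`, both keep their degree over `F`, so their minimal polynomials over `F` are the rational
ones. Scaling the roots of the minimal polynomial of `β` by `α` gives a monic polynomial of
degree `n` over `F` vanishing at `αβ`, hence the minimal polynomial of `αβ`; comparing constant
terms, `α ^ n` is rational. As `α ^ n` and `α ^ (-n)` are algebraic integers, `α ^ n = ±1`.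
-/

open Polynomial IntermediateField

/-- An algebraic unit: root of a monic integer polynomial with constant term ±1. -/
def IsAlgebraicUnit (α : ℂ) : Prop :=
  ∃ p : Polynomial ℤ, p.Monic ∧ (p.coeff 0 = 1 ∨ p.coeff 0 = -1) ∧ Polynomial.aeval α p = 0

/-- The degree of α over ℚ, i.e. [ℚ(α):ℚ]. -/
noncomputable def degQ (α : ℂ) : ℕ := (minpoly ℚ α).natDegree

open Module

theorem minpoly_eq_map_of_natDegree_le {K E L : Type*} [Field K] [Field E] [CommRing L]
    [Algebra K E] [Algebra E L] [Algebra K L] [IsScalarTower K E L] {b : L} (hb : IsIntegral K b)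
    (h : (minpoly K b).natDegree ≤ (minpoly E b).natDegree) :
    minpoly E b = (minpoly K b).map (algebraMap K E) :=
  (eq_of_monic_of_dvd_of_natDegree_le (minpoly.monic hb.tower_top) ((minpoly.monic hb).map _)
    (minpoly.dvd_map_of_isScalarTower K E b) (by rwa [natDegree_map])).symm

section ScaleRoots

variable {F L : Type*} [Field F] [CommRing L] [Algebra F L] {a : F} {b : L}

theorem minpoly_smul_eq_scaleRoots (hb : IsIntegral F b)
    (h : (minpoly F (a • b)).natDegree = (minpoly F b).natDegree) :
    minpoly F (a • b) = (minpoly F b).scaleRoots a := by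
  have hroot : aeval (a • b) ((minpoly F b).scaleRoots a) = 0 := by
    rw [Algebra.smul_def]
    exact scaleRoots_aeval_eq_zero (minpoly.aeval F b)
  refine (eq_of_monic_of_dvd_of_natDegree_le (minpoly.monic (hb.smul a))
    ((monic_scaleRoots_iff a).2 (minpoly.monic hb)) (minpoly.dvd F _ hroot) ?_).symm
  rw [natDegree_scaleRoots, h]

theorem coeff_zero_minpoly_smul (hb : IsIntegral F b)
    (h : (minpoly F (a • b)).natDegree = (minpoly F b).natDegree) :
    (minpoly F (a • b)).coeff 0 = (minpoly F b).coeff 0 * a ^ (minpoly F b).natDegree := by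
  rw [minpoly_smul_eq_scaleRoots hb h, coeff_scaleRoots, Nat.sub_zero]

end ScaleRoots

section Adjoin

variable {K L : Type*} [Field K] [Field L] [Algebra K L] {a b : L}

theorem natDegree_minpoly_dvd_mul_natDegree_minpoly_adjoin (ha : IsIntegral K a)
    (hb : IsIntegral K b) :
    (minpoly K b).natDegree ∣ (minpoly K a).natDegree * (minpoly K⟮a⟯ b).natDegree := by
  have hb' : IsIntegral K⟮a⟯ b := hb.tower_top
  have : FiniteDimensional K K⟮a⟯ := adjoin.finiteDimensional ha
  have : FiniteDimensional K⟮a⟯ K⟮a⟯⟮b⟯ := adjoin.finiteDimensional hb'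
  have : Module.Free K⟮a⟯ K⟮a⟯⟮b⟯ := .of_divisionRing _ _
  have hle : K⟮b⟯ ≤ K⟮a⟯⟮b⟯.restrictScalars K := by
    rw [adjoin_simple_le_iff]
    exact mem_adjoin_simple_self _ b
  rw [← adjoin.finrank ha, ← adjoin.finrank hb', finrank_mul_finrank K K⟮a⟯ K⟮a⟯⟮b⟯,
    ← adjoin.finrank hb]
  exact finrank_dvd_of_le_right hle

theorem minpoly_adjoin_eq_map_of_coprime (ha : IsIntegral K a) (hb : IsIntegral K b)
    (hco : Nat.Coprime (minpoly K a).natDegree (minpoly K b).natDegree) :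
    minpoly K⟮a⟯ b = (minpoly K b).map (algebraMap K K⟮a⟯) := by
  refine minpoly_eq_map_of_natDegree_le hb (Nat.le_of_dvd (minpoly.natDegree_pos hb.tower_top) ?_)
  exact hco.symm.dvd_of_dvd_mul_left (natDegree_minpoly_dvd_mul_natDegree_minpoly_adjoin ha hb)

theorem algebraMap_coeff_zero_minpoly_mul_of_coprime (ha : IsIntegral K a) (hb : IsIntegral K b)
    (hco : Nat.Coprime (minpoly K a).natDegree (minpoly K b).natDegree)
    (heq : (minpoly K (a * b)).natDegree = (minpoly K b).natDegree) :
    algebraMap K L ((minpoly K (a * b)).coeff 0) =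
      algebraMap K L ((minpoly K b).coeff 0) * a ^ (minpoly K b).natDegree := by
  have hbF := minpoly_adjoin_eq_map_of_coprime ha hb hco
  have habF := minpoly_adjoin_eq_map_of_coprime ha (ha.mul hb) (heq ▸ hco)
  have hsmul : AdjoinSimple.gen K a • b = a * b := by
    rw [Algebra.smul_def, AdjoinSimple.algebraMap_gen]
  have hcoeff := coeff_zero_minpoly_smul (a := AdjoinSimple.gen K a) hb.tower_top
    (by rw [hsmul, hbF, habF, natDegree_map, natDegree_map, heq])
  rw [hsmul, hbF, habF, coeff_map, coeff_map, natDegree_map] at hcoeff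
  simpa [← IsScalarTower.algebraMap_apply] using congrArg (algebraMap K⟮a⟯ L) hcoeff

end Adjoin

theorem Rat.eq_one_or_eq_neg_one_of_isIntegral_of_isIntegral_inv {q : ℚ} (hq0 : q ≠ 0)
    (hq : IsIntegral ℤ q) (hq' : IsIntegral ℤ q⁻¹) : q = 1 ∨ q = -1 := by
  obtain ⟨m, rfl⟩ := IsIntegrallyClosed.isIntegral_iff.1 hq
  obtain ⟨m', hm'⟩ := IsIntegrallyClosed.isIntegral_iff.1 hq'
  have hmul : m * m' = 1 := by
    rw [← Int.cast_inj (α := ℚ), Int.cast_mul, Int.cast_one]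
    have := mul_inv_cancel₀ hq0
    rwa [← hm'] at this
  rcases Int.eq_one_or_neg_one_of_mul_eq_one hmul with rfl | rfl <;> simp

namespace IsAlgebraicUnit

variable {x : ℂ}

theorem ne_zero (h : IsAlgebraicUnit x) : x ≠ 0 := by
  rintro rfl
  obtain ⟨p, -, hc, hp⟩ := h
  rw [aeval_def, eval₂_at_zero] at hp
  rcases hc with hc | hc <;> simp [hc] at hp

theorem isIntegral (h : IsAlgebraicUnit x) : IsIntegral ℤ x := by
  obtain ⟨p, hm, -, hp⟩ := h
  exact ⟨p, hm, hp⟩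

theorem isIntegral_inv (h : IsAlgebraicUnit x) : IsIntegral ℤ x⁻¹ := by
  have : Invertible x := invertibleOfNonzero h.ne_zero
  obtain ⟨p, -, hc, hp⟩ := h
  have hroot : eval₂ (algebraMap ℤ ℂ) x⁻¹ p.reverse = 0 := by
    simpa using (eval₂_reverse_eq_zero_iff (algebraMap ℤ ℂ) x p).2 hp
  have hlc : p.reverse.leadingCoeff = p.coeff 0 := by
    rw [reverse_leadingCoeff, trailingCoeff, natTrailingDegree_eq_zero.2 (.inr (by grind))]
  rcases hc with hc | hc
  · exact ⟨p.reverse, hlc.trans hc, hroot⟩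
  · exact ⟨-p.reverse, by simp [Monic, hlc, hc], by rw [eval₂_neg, hroot, neg_zero]⟩

theorem pow_eq_one_or_eq_neg_one_of_eq_algebraMap (hx : IsAlgebraicUnit x) (n : ℕ) {q : ℚ}
    (h : x ^ n = algebraMap ℚ ℂ q) : x ^ n = 1 ∨ x ^ n = -1 := by
  have hinj := (algebraMap ℚ ℂ).injective
  have hq : IsIntegral ℤ q := (isIntegral_algebraMap_iff hinj).1 (h ▸ hx.isIntegral.pow n)
  have hq' : IsIntegral ℤ q⁻¹ := by
    rw [← isIntegral_algebraMap_iff hinj, map_inv₀, ← h, ← inv_pow]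
    exact hx.isIntegral_inv.pow n
  have hq0 : q ≠ 0 := by
    rintro rfl
    exact pow_ne_zero n hx.ne_zero (by simpa using h)
  rcases Rat.eq_one_or_eq_neg_one_of_isIntegral_of_isIntegral_inv hq0 hq hq' with rfl | rfl <;>
    simp [h]

end IsAlgebraicUnit

theorem stmt_4 (α β : ℂ) (hα : IsAlgebraicUnit α) (hβ : IsAlgebraicUnit β)
    (hco : Nat.Coprime (degQ α) (degQ β))
    (heq : degQ (α * β) = degQ β) :
    α ^ (degQ β) = 1 ∨ α ^ (degQ β) = -1 := by
  have hβQ : IsIntegral ℚ β := hβ.isIntegral.tower_top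
  have hc : (minpoly ℚ β).coeff 0 ≠ 0 := minpoly.coeff_zero_ne_zero hβQ hβ.ne_zero
  have key := algebraMap_coeff_zero_minpoly_mul_of_coprime hα.isIntegral.tower_top hβQ hco heq
  refine hα.pow_eq_one_or_eq_neg_one_of_eq_algebraMap (degQ β)
    (q := (minpoly ℚ (α * β)).coeff 0 / (minpoly ℚ β).coeff 0) ?_
  rw [map_div₀, key, mul_div_cancel_left₀ _ ((_root_.map_ne_zero _).2 hc)]
  rfl
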